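/- arXiv:1606.08939 — 2 statements merged into one kernel-verified Lean document; each statement's English description precedes it below -/
import Mathlib

section
/- Let β > 0, L > 0, and let (A(t))_{t∈ℕ} be a sequence of n×n row-stochastic matrices each of which is β-rooted; let q_t, t ∈ ℕ, be stochastic vectors such that A(t)A(t−1)⋯A(s) → 𝟏 q_sᵀ entrywise as t → ∞ for each s. Let (α_t)_{t∈ℕ} be a nonnegative sequence with ∑_{t=1}^∞ α_t² < ∞, and let (d(t))_{t∈ℕ} be vectors in ℝⁿ with ‖d(t)‖ ≤ L for all t. Define x(t+1) = A(t)x(t) − α_t d(t) for t ∈ ℕ, from an arbitrary x(0) ∈ ℝⁿ, and set y(t) = q_tᵀ x(t). Then ∑_{t=1}^∞ α_t ‖x(t) − 𝟏 y(t)‖ < ∞. -/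
/-!
Write `spread v = max v - min v`. Since `q t` is a probability vector, every entry of
`x t - 𝟏 y t` is bounded by `spread (x t)`, so it suffices to show `∑ αₜ spread (x t) < ∞`.

For `k = 0, 1, …` let `reach k i` be the set of columns `j` with `β ^ k ≤ (A (s+k-1) ⋯ A s) i j`.
These sets only grow, and as long as they have no common element the total size of the family
increases at every step (otherwise the root of the graph of `A (s + k)` lies in all of them).
Hence every product of `N = n ^ 2` consecutive matrices has a column bounded below by `δ = β ^ N`,
and Dobrushin's contraction gives
`spread (x (t + N)) ≤ (1 - δ) spread (x t) + 2 L ∑_{j<N} α (t + j)`.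
Squaring via convexity, `spread (x (t + N)) ^ 2 ≤ (1 - δ) spread (x t) ^ 2 + w t` with `w`
summable, so `spread (x t)` is square-summable and `2 αₜ spread (x t) ≤ αₜ ^ 2 + spread (x t) ^ 2`.
-/

open Filter

/-- A matrix is row-stochastic if it has nonnegative entries and each row sums to 1. -/
def RowStochastic {n : ℕ} (A : Matrix (Fin n) (Fin n) ℝ) : Prop :=
  (∀ i j, 0 ≤ A i j) ∧ ∀ i, ∑ j, A i j = 1

/-- A vector is stochastic if its entries are nonnegative and sum to 1. -/
def StochasticVec {n : ℕ} (q : Fin n → ℝ) : Prop :=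
  (∀ i, 0 ≤ q i) ∧ ∑ i, q i = 1

/-- A directed graph is rooted if some vertex has a directed path to every other vertex. -/
def Rooted {V : Type*} (E : V → V → Prop) : Prop :=
  ∃ r : V, ∀ v : V, Relation.ReflTransGen E r v

/-- A row-stochastic matrix `A` is `β`-rooted if its diagonal entries are at least `β`
and the directed graph with an edge from `j` to `i` whenever `i ≠ j` and `A i j ≥ β`
is rooted. -/
def BetaRooted {n : ℕ} (β : ℝ) (A : Matrix (Fin n) (Fin n) ℝ) : Prop :=
  (∀ i, β ≤ A i i) ∧ Rooted (fun j i : Fin n => i ≠ j ∧ β ≤ A i j)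

/-- The backward product `Φ(t,s) = A(t) A(t-1) ⋯ A(s)` (for `t ≥ s`). -/
def backProd {n : ℕ} (A : ℕ → Matrix (Fin n) (Fin n) ℝ) (s t : ℕ) :
    Matrix (Fin n) (Fin n) ℝ :=
  (((List.range' s (t + 1 - s)).reverse).map A).prod

/-- The Euclidean norm of a vector in `ℝⁿ`. -/
noncomputable def euclNorm {n : ℕ} (v : Fin n → ℝ) : ℝ :=
  Real.sqrt (∑ i, (v i) ^ 2)

open Finset Matrix

section Spread

variable {ι : Type*} [Fintype ι] [Nonempty ι]

noncomputable def spread (v : ι → ℝ) : ℝ :=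
  univ.sup' univ_nonempty v - univ.inf' univ_nonempty v

lemma spread_nonneg (v : ι → ℝ) : 0 ≤ spread v := by
  obtain ⟨i⟩ := ‹Nonempty ι›
  have := (inf'_le v (mem_univ i)).trans (le_sup' v (mem_univ i))
  unfold spread
  linarith

lemma sum_mul_le_sum_mul_sup' {c : ι → ℝ} (hc : ∀ j, 0 ≤ c j) (v : ι → ℝ) :
    ∑ j, c j * v j ≤ (∑ j, c j) * univ.sup' univ_nonempty v := by
  rw [sum_mul]
  exact sum_le_sum fun j _ => mul_le_mul_of_nonneg_left (le_sup' v (mem_univ j)) (hc j)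

lemma sum_mul_inf'_le_sum_mul {c : ι → ℝ} (hc : ∀ j, 0 ≤ c j) (v : ι → ℝ) :
    (∑ j, c j) * univ.inf' univ_nonempty v ≤ ∑ j, c j * v j := by
  rw [sum_mul]
  exact sum_le_sum fun j _ => mul_le_mul_of_nonneg_left (inf'_le v (mem_univ j)) (hc j)

lemma abs_sub_sum_mul_le_spread {q : ι → ℝ} (hq0 : ∀ j, 0 ≤ q j) (hq1 : ∑ j, q j = 1)
    (v : ι → ℝ) (i : ι) : |v i - ∑ j, q j * v j| ≤ spread v := by
  have hsup := sum_mul_le_sum_mul_sup' hq0 v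
  have hinf := sum_mul_inf'_le_sum_mul hq0 v
  rw [hq1, one_mul] at hsup hinf
  have := inf'_le v (mem_univ i)
  have := le_sup' v (mem_univ i)
  rw [abs_sub_le_iff]
  unfold spread
  constructor <;> linarith

lemma spread_le_spread_add (u w : ι → ℝ) : spread u ≤ spread w + 2 * ‖u - w‖ := by
  have hclose : ∀ i, |u i - w i| ≤ ‖u - w‖ := fun i => norm_le_pi_norm (u - w) i
  have hsup : univ.sup' univ_nonempty u ≤ univ.sup' univ_nonempty w + ‖u - w‖ :=
    sup'_le _ _ fun i _ => by linarith [(abs_le.mp (hclose i)).2, le_sup' w (mem_univ i)]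
  have hinf : univ.inf' univ_nonempty w - ‖u - w‖ ≤ univ.inf' univ_nonempty u :=
    le_inf' _ _ fun i _ => by linarith [(abs_le.mp (hclose i)).1, inf'_le w (mem_univ i)]
  unfold spread
  linarith

/-- Dobrushin's contraction: every row of `P` gives weight at least `δ` to the same entry
`v j₀`. -/
lemma spread_mulVec_le [DecidableEq ι] {P : Matrix ι ι ℝ} (hP : P ∈ rowStochastic ℝ ι)
    {δ : ℝ} {j₀ : ι} (hcol : ∀ i, δ ≤ P i j₀) (v : ι → ℝ) :
    spread (P *ᵥ v) ≤ (1 - δ) * spread v := by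
  set c : ι → ι → ℝ := fun i => P i - Pi.single j₀ δ
  have hc0 : ∀ i j, 0 ≤ c i j := fun i j => by
    rcases eq_or_ne j j₀ with rfl | h
    · simpa [c] using hcol i
    · simpa [c, h] using nonneg_of_mem_rowStochastic hP
  have hc1 : ∀ i, ∑ j, c i j = 1 - δ := fun i => by
    simp [c, sum_sub_distrib, sum_row_of_mem_rowStochastic hP i]
  have hsplit : ∀ i, (P *ᵥ v) i = δ * v j₀ + ∑ j, c i j * v j := fun i => by
    simp [c, mulVec, dotProduct, sub_mul, sum_sub_distrib, Pi.single_apply]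
  have hsup :
      univ.sup' univ_nonempty (P *ᵥ v) ≤ δ * v j₀ + (1 - δ) * univ.sup' univ_nonempty v :=
    sup'_le _ _ fun i _ => by
      rw [hsplit, ← hc1 i]
      linarith [sum_mul_le_sum_mul_sup' (hc0 i) v]
  have hinf :
      δ * v j₀ + (1 - δ) * univ.inf' univ_nonempty v ≤ univ.inf' univ_nonempty (P *ᵥ v) :=
    le_inf' _ _ fun i _ => by
      rw [hsplit, ← hc1 i]
      linarith [sum_mul_inf'_le_sum_mul (hc0 i) v]
  unfold spread
  linarith

end Spread

section WindowProd

variable {ι : Type*} [Fintype ι] [DecidableEq ι]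

lemma norm_mulVec_le_of_mem_rowStochastic {P : Matrix ι ι ℝ} (hP : P ∈ rowStochastic ℝ ι)
    (v : ι → ℝ) : ‖P *ᵥ v‖ ≤ ‖v‖ := by
  refine (pi_norm_le_iff_of_nonneg (norm_nonneg v)).mpr fun i => ?_
  calc ‖(P *ᵥ v) i‖ ≤ ∑ j, ‖P i j * v j‖ := norm_sum_le _ _
    _ ≤ ∑ j, P i j * ‖v‖ := sum_le_sum fun j _ => by
        rw [norm_mul, Real.norm_of_nonneg (nonneg_of_mem_rowStochastic hP)]
        exact mul_le_mul_of_nonneg_left (norm_le_pi_norm v j) (nonneg_of_mem_rowStochastic hP)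
    _ = ‖v‖ := by rw [← sum_mul, sum_row_of_mem_rowStochastic hP i, one_mul]

def windowProd (A : ℕ → Matrix ι ι ℝ) (s : ℕ) : ℕ → Matrix ι ι ℝ
  | 0 => 1
  | k + 1 => A (s + k) * windowProd A s k

lemma windowProd_mem_rowStochastic {A : ℕ → Matrix ι ι ℝ}
    (hA : ∀ t, A t ∈ rowStochastic ℝ ι) (s k : ℕ) :
    windowProd A s k ∈ rowStochastic ℝ ι := by
  induction k with
  | zero => exact Submonoid.one_mem _
  | succ k ih => exact Submonoid.mul_mem _ (hA (s + k)) ih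

noncomputable def reach (β : ℝ) (A : ℕ → Matrix ι ι ℝ) (s k : ℕ) (i : ι) : Finset ι :=
  {j | β ^ k ≤ windowProd A s k i j}

section Reach

variable {β : ℝ} {A : ℕ → Matrix ι ι ℝ} {s : ℕ}

lemma reach_subset_reach_succ_of_le (hA : ∀ t, A t ∈ rowStochastic ℝ ι) (hβ : 0 ≤ β) {k : ℕ}
    {i l : ι} (hil : β ≤ A (s + k) i l) : reach β A s k l ⊆ reach β A s (k + 1) i := by
  intro j hj
  simp only [reach, mem_filter, mem_univ, true_and] at hj ⊢
  have hW := windowProd_mem_rowStochastic hA s k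
  calc β ^ (k + 1) = β * β ^ k := pow_succ' β k
    _ ≤ A (s + k) i l * windowProd A s k l j :=
        mul_le_mul hil hj (by positivity) (nonneg_of_mem_rowStochastic (hA _))
    _ ≤ ∑ l', A (s + k) i l' * windowProd A s k l' j :=
        single_le_sum (f := fun l' => A (s + k) i l' * windowProd A s k l' j)
          (fun l' _ => mul_nonneg (nonneg_of_mem_rowStochastic (hA _))
            (nonneg_of_mem_rowStochastic hW)) (mem_univ l)

variable (hA : ∀ t, A t ∈ rowStochastic ℝ ι) (hβ : 0 ≤ β)
  (hdiag : ∀ t i, β ≤ A t i i)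
include hA hβ hdiag

lemma reach_subset_reach_succ (k : ℕ) (i : ι) :
    reach β A s k i ⊆ reach β A s (k + 1) i :=
  reach_subset_reach_succ_of_le hA hβ (hdiag _ i)

lemma mem_reach_self (k : ℕ) (i : ι) : i ∈ reach β A s k i := by
  induction k with
  | zero => simp [reach, windowProd]
  | succ k ih => exact reach_subset_reach_succ hA hβ hdiag k i ih

/-- If no `reach` set grows at step `k`, then `reach k` is monotone along the edges of
`A (s + k)`, so the root of that graph lies in every `reach k i`. -/
lemma exists_mem_reach_forall_or_card_add_le
    (hroot : ∀ t, Rooted (fun j i : ι => i ≠ j ∧ β ≤ A t i j)) (k : ℕ) :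
    (∃ j, ∀ i, j ∈ reach β A s k i) ∨
      Fintype.card ι + k ≤ ∑ i, #(reach β A s k i) := by
  induction k with
  | zero =>
    right
    calc Fintype.card ι + 0 = ∑ _i : ι, 1 := by simp
      _ ≤ ∑ i, #(reach β A s 0 i) :=
        sum_le_sum fun i _ => card_pos.mpr ⟨i, mem_reach_self hA hβ hdiag 0 i⟩
  | succ k ih =>
    have hmono := reach_subset_reach_succ (s := s) hA hβ hdiag k
    rcases ih with ⟨j, hj⟩ | hcard
    · exact .inl ⟨j, fun i => hmono i (hj i)⟩
    by_cases hstable : ∀ i, reach β A s k i = reach β A s (k + 1) i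
    · left
      obtain ⟨r, hr⟩ := hroot (s + k)
      refine ⟨r, fun i => hmono i ?_⟩
      suffices reach β A s k r ⊆ reach β A s k i from this (mem_reach_self hA hβ hdiag k r)
      induction hr i with
      | refl => exact subset_rfl
      | tail _ hedge ih =>
        exact ih.trans ((reach_subset_reach_succ_of_le hA hβ hedge.2).trans (hstable _).ge)
    · right
      obtain ⟨i₀, hi₀⟩ := not_forall.mp hstable
      have : ∑ i, #(reach β A s k i) < ∑ i, #(reach β A s (k + 1) i) :=
        sum_lt_sum (fun i _ => card_le_card (hmono i)) ⟨i₀, mem_univ _,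
          card_lt_card (Finset.ssubset_iff_subset_ne.mpr ⟨hmono i₀, hi₀⟩)⟩
      omega

lemma exists_forall_pow_le_windowProd [Nonempty ι]
    (hroot : ∀ t, Rooted (fun j i : ι => i ≠ j ∧ β ≤ A t i j)) (s : ℕ) :
    ∃ j, ∀ i, β ^ (Fintype.card ι ^ 2) ≤ windowProd A s (Fintype.card ι ^ 2) i j := by
  rcases exists_mem_reach_forall_or_card_add_le hA hβ hdiag hroot (Fintype.card ι ^ 2)
    with ⟨j, hj⟩ | hcard
  · exact ⟨j, fun i => by simpa [reach] using hj i⟩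
  · have : ∑ i, #(reach β A s (Fintype.card ι ^ 2) i) ≤ Fintype.card ι ^ 2 := by
      simpa [sq] using sum_le_sum fun i (_ : i ∈ univ) => card_le_univ (reach β A s _ i)
    have := Fintype.card_pos (α := ι)
    omega

end Reach

end WindowProd

section Dynamics

variable {ι : Type*} [Fintype ι] [DecidableEq ι]
  {A : ℕ → Matrix ι ι ℝ} {α : ℕ → ℝ} {d x : ℕ → ι → ℝ} {L : ℝ}
  (hA : ∀ t, A t ∈ rowStochastic ℝ ι) (hα0 : ∀ t, 0 ≤ α t) (hd : ∀ t, ‖d t‖ ≤ L)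
  (hdyn : ∀ t, x (t + 1) = A t *ᵥ x t - α t • d t)
include hA hα0 hd hdyn

lemma norm_sub_windowProd_mulVec_le (t k : ℕ) :
    ‖x (t + k) - windowProd A t k *ᵥ x t‖ ≤ L * ∑ j ∈ range k, α (t + j) := by
  induction k with
  | zero => simp [windowProd]
  | succ k ih =>
    have hstep : x (t + (k + 1)) - windowProd A t (k + 1) *ᵥ x t
        = A (t + k) *ᵥ (x (t + k) - windowProd A t k *ᵥ x t) - α (t + k) • d (t + k) := by
      rw [← add_assoc, hdyn, windowProd, ← mulVec_mulVec, mulVec_sub]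
      abel
    have hpert : ‖α (t + k) • d (t + k)‖ ≤ α (t + k) * L := by
      rw [norm_smul, Real.norm_of_nonneg (hα0 _)]
      exact mul_le_mul_of_nonneg_left (hd _) (hα0 _)
    calc ‖x (t + (k + 1)) - windowProd A t (k + 1) *ᵥ x t‖
        ≤ ‖x (t + k) - windowProd A t k *ᵥ x t‖ + ‖α (t + k) • d (t + k)‖ := by
          rw [hstep]
          exact (norm_sub_le _ _).trans
            (add_le_add_left (norm_mulVec_le_of_mem_rowStochastic (hA _) _) _)
      _ ≤ L * ∑ j ∈ range (k + 1), α (t + j) := by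
          rw [sum_range_succ]
          linarith

lemma spread_le_of_forall_le_windowProd [Nonempty ι] {δ : ℝ} {t k : ℕ} {j₀ : ι}
    (hcol : ∀ i, δ ≤ windowProd A t k i j₀) :
    spread (x (t + k)) ≤ (1 - δ) * spread (x t) + 2 * L * ∑ j ∈ range k, α (t + j) := by
  have := spread_le_spread_add (x (t + k)) (windowProd A t k *ᵥ x t)
  have := spread_mulVec_le (windowProd_mem_rowStochastic hA t k) hcol (x t)
  have := norm_sub_windowProd_mulVec_le hA hα0 hd hdyn t k
  linarith

end Dynamics

lemma sq_le_mul_sq_add_sq_div {δ a b c : ℝ} (hδ0 : 0 < δ) (hδ1 : δ ≤ 1) (ha : 0 ≤ a)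
    (h : a ≤ (1 - δ) * b + c) : a ^ 2 ≤ (1 - δ) * b ^ 2 + c ^ 2 / δ := by
  have hconv : (1 - δ) * b ^ 2 + c ^ 2 / δ - ((1 - δ) * b + c) ^ 2
      = (1 - δ) / δ * (δ * b - c) ^ 2 := by
    field_simp
    ring
  have : 0 ≤ (1 - δ) / δ * (δ * b - c) ^ 2 := by
    have : 0 ≤ 1 - δ := by linarith
    positivity
  nlinarith [pow_le_pow_left₀ ha h 2]

lemma summable_of_le_mul_add {u w : ℕ → ℝ} {c : ℝ} {m : ℕ} (hc : c < 1)
    (hu : ∀ t, 0 ≤ u t) (hw0 : ∀ t, 0 ≤ w t) (hw : Summable w)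
    (h : ∀ t, u (t + m) ≤ c * u t + w t) :
    Summable u := by
  refine summable_of_sum_range_le hu (c := (∑ t ∈ range m, u t + ∑' t, w t) / (1 - c))
    fun N => ?_
  have hshift :
      ∑ t ∈ range (m + N), u t = ∑ t ∈ range m, u t + ∑ t ∈ range N, u (t + m) := by
    simp only [sum_range_add, add_comm _ m]
  have hmono : ∑ t ∈ range N, u t ≤ ∑ t ∈ range (m + N), u t :=
    sum_le_sum_of_subset_of_nonneg (range_subset_range.mpr (by omega)) fun t _ _ => hu t
  have hrec :
      ∑ t ∈ range N, u (t + m) ≤ c * ∑ t ∈ range N, u t + ∑ t ∈ range N, w t := by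
    rw [mul_sum, ← sum_add_distrib]
    exact sum_le_sum fun t _ => h t
  have hW : ∑ t ∈ range N, w t ≤ ∑' t, w t := hw.sum_le_tsum _ fun t _ => hw0 t
  rw [le_div_iff₀ (by linarith)]
  linarith

lemma summable_spread_sq {ι : Type*} [Fintype ι] [DecidableEq ι] [Nonempty ι]
    {A : ℕ → Matrix ι ι ℝ} {α : ℕ → ℝ} {d x : ℕ → ι → ℝ} {β L : ℝ}
    (hA : ∀ t, A t ∈ rowStochastic ℝ ι) (hβ : 0 < β) (hdiag : ∀ t i, β ≤ A t i i)
    (hroot : ∀ t, Rooted (fun j i : ι => i ≠ j ∧ β ≤ A t i j))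
    (hα0 : ∀ t, 0 ≤ α t) (hα2 : Summable fun t => α t ^ 2) (hd : ∀ t, ‖d t‖ ≤ L)
    (hdyn : ∀ t, x (t + 1) = A t *ᵥ x t - α t • d t) :
    Summable fun t => spread (x t) ^ 2 := by
  set m := Fintype.card ι ^ 2
  set δ := β ^ m
  have hδ0 : 0 < δ := pow_pos hβ m
  have hδ1 : δ ≤ 1 := pow_le_one₀ hβ.le
    ((hdiag 0 (Classical.arbitrary ι)).trans (le_one_of_mem_rowStochastic (hA 0)))
  have hstep : ∀ t, spread (x (t + m)) ^ 2
      ≤ (1 - δ) * spread (x t) ^ 2 + 4 * L ^ 2 / δ * (m * ∑ j ∈ range m, α (t + j) ^ 2) := by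
    intro t
    obtain ⟨j₀, hj₀⟩ := exists_forall_pow_le_windowProd hA hβ.le hdiag hroot t
    have hcs := sq_sum_le_card_mul_sum_sq (s := range m) (f := fun j => α (t + j))
    rw [card_range] at hcs
    calc spread (x (t + m)) ^ 2
        ≤ (1 - δ) * spread (x t) ^ 2 + (2 * L * ∑ j ∈ range m, α (t + j)) ^ 2 / δ :=
          sq_le_mul_sq_add_sq_div hδ0 hδ1 (spread_nonneg _)
            (spread_le_of_forall_le_windowProd hA hα0 hd hdyn hj₀)
      _ = (1 - δ) * spread (x t) ^ 2 + 4 * L ^ 2 / δ * (∑ j ∈ range m, α (t + j)) ^ 2 := by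
          ring
      _ ≤ (1 - δ) * spread (x t) ^ 2 + 4 * L ^ 2 / δ * (m * ∑ j ∈ range m, α (t + j) ^ 2) :=
          by gcongr
  refine summable_of_le_mul_add (by linarith) (fun t => sq_nonneg _) (fun t => by positivity)
    (((summable_sum fun _ _ => (summable_nat_add_iff _).mpr hα2).mul_left _).mul_left _) hstep

lemma norm_le_euclNorm {n : ℕ} (v : Fin n → ℝ) : ‖v‖ ≤ euclNorm v :=
  (pi_norm_le_iff_of_nonneg (Real.sqrt_nonneg _)).mpr fun i =>
    Real.abs_le_sqrt (single_le_sum (f := fun j => v j ^ 2) (fun _ _ => sq_nonneg _) (mem_univ i))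

lemma euclNorm_le_sqrt_mul_norm {n : ℕ} (v : Fin n → ℝ) : euclNorm v ≤ √n * ‖v‖ := by
  calc euclNorm v ≤ √(∑ _i : Fin n, ‖v‖ ^ 2) :=
        Real.sqrt_le_sqrt (sum_le_sum fun i _ => by
          simpa using pow_le_pow_left₀ (abs_nonneg _) (norm_le_pi_norm v i) 2)
    _ = √n * ‖v‖ := by simp [Real.sqrt_mul, Real.sqrt_sq]

theorem stmt5_general {n : ℕ} (β L : ℝ) (hβ : 0 < β)
    (A : ℕ → Matrix (Fin n) (Fin n) ℝ)
    (hstoch : ∀ t, RowStochastic (A t)) (hrooted : ∀ t, BetaRooted β (A t))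
    (q : ℕ → Fin n → ℝ) (hq : ∀ s, StochasticVec (q s))
    (α : ℕ → ℝ) (hα0 : ∀ t, 0 ≤ α t) (hα2 : Summable (fun t => (α t) ^ 2))
    (d : ℕ → Fin n → ℝ) (hd : ∀ t, euclNorm (d t) ≤ L)
    (x : ℕ → Fin n → ℝ)
    (hdyn : ∀ t, x (t + 1) = (A t).mulVec (x t) - α t • d t) :
    Summable (fun t => α t * euclNorm (fun i => x t i - ∑ j, q t j * x t j)) := by
  rcases isEmpty_or_nonempty (Fin n) with hn | hn
  · simp [euclNorm]
  have hspread := summable_spread_sq (fun t => mem_rowStochastic_iff_sum.mpr (hstoch t)) hβ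
    (fun t => (hrooted t).1) (fun t => (hrooted t).2) hα0 hα2
    (fun t => (norm_le_euclNorm (d t)).trans (hd t)) hdyn
  refine .of_nonneg_of_le (fun t => mul_nonneg (hα0 t) (Real.sqrt_nonneg _)) (fun t => ?_)
    ((hα2.add hspread).mul_left (√n / 2))
  have hdev : ‖fun i => x t i - ∑ j, q t j * x t j‖ ≤ spread (x t) :=
    (pi_norm_le_iff_of_nonneg (spread_nonneg _)).mpr
      fun i => abs_sub_sum_mul_le_spread (hq t).1 (hq t).2 (x t) i
  calc α t * euclNorm (fun i => x t i - ∑ j, q t j * x t j)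
      ≤ α t * (√n * spread (x t)) :=
        mul_le_mul_of_nonneg_left ((euclNorm_le_sqrt_mul_norm _).trans
          (mul_le_mul_of_nonneg_left hdev (Real.sqrt_nonneg _))) (hα0 t)
    _ ≤ √n / 2 * (α t ^ 2 + spread (x t) ^ 2) := by
        nlinarith [two_mul_le_add_sq (α t) (spread (x t)), Real.sqrt_nonneg n]

/-- If the matrices are `β`-rooted and row-stochastic, the gradient perturbations are
bounded by `L`, and the step-sizes are square-summable, then `∑ₜ αₜ ‖x(t) − 𝟏 y(t)‖ < ∞`, where
`y(t) = qₜᵀ x(t)`. -/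
theorem stmt5 {n : ℕ} (β L : ℝ) (hβ : 0 < β) (hL : 0 < L)
    (A : ℕ → Matrix (Fin n) (Fin n) ℝ)
    (hstoch : ∀ t, RowStochastic (A t)) (hrooted : ∀ t, BetaRooted β (A t))
    (q : ℕ → Fin n → ℝ) (hq : ∀ s, StochasticVec (q s))
    (hconv : ∀ s i j, Tendsto (fun t => backProd A s t i j) atTop (nhds (q s j)))
    (α : ℕ → ℝ) (hα0 : ∀ t, 0 ≤ α t) (hα2 : Summable (fun t => (α t) ^ 2))
    (d : ℕ → Fin n → ℝ) (hd : ∀ t, euclNorm (d t) ≤ L)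
    (x : ℕ → Fin n → ℝ)
    (hdyn : ∀ t, x (t + 1) = (A t).mulVec (x t) - α t • d t) :
    Summable (fun t => α t * euclNorm (fun i => x t i - ∑ j, q t j * x t j)) :=
  stmt5_general β L hβ A hstoch hrooted q hq α hα0 hα2 d hd x hdyn
end

section
/- Let F ∈ ℕ, η > 0, L > 0, and let G = (V, E) be a directed graph on a finite vertex set that is (F+1, F+1)-robust. Let A ⊆ V with |A| ≤ F be a set of malicious adversarial nodes and R = V ∖ A the regular nodes, each regular node i holding a convex function f_i : ℝ → ℝ all of whose subgradients are bounded in magnitude by L. Suppose the regular nodes run the LF dynamics with parameter F in the malicious (broadcast) model with weights lower bounded by η, and the step-sizes α_t ≥ 0 are bounded. Define M(t) = max_{i∈R} x_i(t), m(t) = min_{i∈R} x_i(t), D(t) = M(t) − m(t), and δ_t = L · sup_{τ≥t} α_τ. Then for every t ∈ ℕ, D(t + |R|) ≤ (1 − η^{|R|}/2) · D(t) + 2|R| δ_t. -/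
open Filter
open scoped Classical

/-- The in-neighborhood of `v` in the directed graph with edge relation `E`
(`E u v` means there is an edge from `u` to `v`). -/
noncomputable def NIn {V : Type*} [Fintype V] (E : V → V → Prop) (v : V) : Finset V :=
  Finset.univ.filter (fun u => E u v)

/-- A set `S` is `r`-reachable if some vertex of `S` has at least `r` in-neighbors outside `S`. -/
def RReachable {V : Type*} [Fintype V] (E : V → V → Prop) (r : ℕ) (S : Finset V) : Prop :=
  ∃ v ∈ S, r ≤ ((NIn E v) \ S).card

/-- A directed graph is `r`-robust if for every pair of disjoint nonempty vertex subsets,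
at least one of them is `r`-reachable. -/
def RRobust {V : Type*} [Fintype V] (E : V → V → Prop) (r : ℕ) : Prop :=
  ∀ S₁ S₂ : Finset V, S₁.Nonempty → S₂.Nonempty → Disjoint S₁ S₂ →
    RReachable E r S₁ ∨ RReachable E r S₂

/-- A directed graph is `(r,s)`-robust if for every pair of disjoint nonempty vertex
subsets `S₁, S₂`, either every node of `S₁` has at least `r` in-neighbors outside `S₁`,
or every node of `S₂` has at least `r` in-neighbors outside `S₂`, or at least `s` nodes
of `S₁ ∪ S₂` have at least `r` in-neighbors outside their respective sets. -/
def RSRobust {V : Type*} [Fintype V] (E : V → V → Prop) (r s : ℕ) : Prop :=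
  ∀ S₁ S₂ : Finset V, S₁.Nonempty → S₂.Nonempty → Disjoint S₁ S₂ →
    (∀ v ∈ S₁, r ≤ ((NIn E v) \ S₁).card) ∨
    (∀ v ∈ S₂, r ≤ ((NIn E v) \ S₂).card) ∨
    s ≤ ((S₁.filter (fun v => r ≤ ((NIn E v) \ S₁).card)) ∪
         (S₂.filter (fun v => r ≤ ((NIn E v) \ S₂).card))).card

/-- `d` is a subgradient of `f` at `x`. -/
def IsSubgradient (f : ℝ → ℝ) (x d : ℝ) : Prop :=
  ∀ y, f x + d * (y - x) ≤ f y

/-- All subgradients of `f` are bounded in magnitude by `L`. -/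
def HasBoundedSubgradients (f : ℝ → ℝ) (L : ℝ) : Prop :=
  ∀ x d, IsSubgradient f x d → |d| ≤ L

/-- `J` is an admissible LF-retained set with parameter `F` for the values `ξ` on the
in-neighborhood `N`, relative to the node's own value `xi`:  `J = N \ (H ∪ L)` where `H`
consists of (at most) the `F` largest received values strictly greater than `xi` (all of
them if there are fewer than `F`), and symmetrically `L` consists of (at most) the `F`
smallest received values strictly less than `xi`. -/
def IsLFRetained {ι : Type*} [DecidableEq ι] (F : ℕ) (N : Finset ι) (ξ : ι → ℝ)
    (xi : ℝ) (J : Finset ι) : Prop :=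
  ∃ H L : Finset ι,
    J = N \ (H ∪ L) ∧
    H ⊆ N.filter (fun j => xi < ξ j) ∧
    (∀ j ∈ H, ∀ k ∈ (N.filter (fun j => xi < ξ j)) \ H, ξ k ≤ ξ j) ∧
    ((N.filter (fun j => xi < ξ j)).card ≤ F → H = N.filter (fun j => xi < ξ j)) ∧
    (F < (N.filter (fun j => xi < ξ j)).card → H.card = F) ∧
    L ⊆ N.filter (fun j => ξ j < xi) ∧
    (∀ j ∈ L, ∀ k ∈ (N.filter (fun j => ξ j < xi)) \ L, ξ j ≤ ξ k) ∧
    ((N.filter (fun j => ξ j < xi)).card ≤ F → L = N.filter (fun j => ξ j < xi)) ∧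
    (F < (N.filter (fun j => ξ j < xi)).card → L.card = F)

/-- The LF dynamics with parameter `F` in the malicious (broadcast) model: at each
time-step, each regular node `i ∈ R` filters the values of its in-neighbors (the same
broadcast values `x t j` for all receivers), forms a convex combination of its own value
and the retained values with weights lower bounded by `η`, and takes a subgradient step
of its local function `f i` with step-size `α t`. -/
def LFMalicious {V : Type*} [Fintype V] [DecidableEq V] (E : V → V → Prop) (F : ℕ)
    (η : ℝ) (R : Finset V) (f : V → ℝ → ℝ) (α : ℕ → ℝ) (x : ℕ → V → ℝ) : Prop :=
  ∀ t : ℕ, ∀ i ∈ R, ∃ (J : Finset V) (a : V → ℝ) (d : ℝ),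
    IsLFRetained F (NIn E i) (x t) (x t i) J ∧
    (∀ j ∈ insert i J, η ≤ a j) ∧
    a i + ∑ j ∈ J, a j = 1 ∧
    IsSubgradient (f i) (a i * x t i + ∑ j ∈ J, a j * x t j) d ∧
    x (t + 1) i = (a i * x t i + ∑ j ∈ J, a j * x t j) - α t * d

/-- The LF dynamics with parameter `F` in the Byzantine model: `χ t i j` is the value
received by node `i` from its in-neighbor `j` at time `t` (equal to the true state
`x t j` whenever `j` is regular, arbitrary otherwise); each regular node filters the
received values, forms a convex combination with weights lower bounded by `η`, and takes
a subgradient step of its local function. -/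
def LFByzantine {V : Type*} [Fintype V] [DecidableEq V] (E : V → V → Prop) (F : ℕ)
    (η : ℝ) (R : Finset V) (f : V → ℝ → ℝ) (α : ℕ → ℝ) (x : ℕ → V → ℝ)
    (χ : ℕ → V → V → ℝ) : Prop :=
  (∀ t : ℕ, ∀ i ∈ R, ∀ j ∈ R, χ t i j = x t j) ∧
  ∀ t : ℕ, ∀ i ∈ R, ∃ (J : Finset V) (a : V → ℝ) (d : ℝ),
    IsLFRetained F (NIn E i) (χ t i) (x t i) J ∧
    (∀ j ∈ insert i J, η ≤ a j) ∧
    a i + ∑ j ∈ J, a j = 1 ∧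
    IsSubgradient (f i) (a i * x t i + ∑ j ∈ J, a j * χ t i j) d ∧
    x (t + 1) i = (a i * x t i + ∑ j ∈ J, a j * χ t i j) - α t * d

/-!
Let `δ = L · sup_{τ ≥ t} α_τ`, let `M`, `m` be the largest and smallest regular values at time
`t`, and `D = M - m`. Since at most `F` nodes are adversarial, the filter always discards the
values outside the current regular range, so after `s` steps every regular value lies in
`[m - sδ, M + sδ]`. The level `U_s = M - η^s D/2 + sδ` propagates: a regular node that is at most
`U_s`, or that has `F + 1` in-neighbours at most `U_s` (one of which survives the filter), is at
most `η U_s + (1 - η)(M + sδ) + δ = U_{s+1}` one step later. The lower level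
`B_s = m + η^s D/2 - sδ` is the same statement for the negated dynamics. Hence regular nodes only
leave the sets above `U_s` and below `B_s`, and while both contain regular nodes,
`(F+1, F+1)`-robustness makes at least one regular node leave at each step. So within `|R|` steps
one of them has no regular node, which confines all regular values at time `t + |R|` to an
interval of length `(1 - η^{|R|}/2) D + 2|R|δ`.
-/

open Finset

section Filtering

variable {ι : Type*} [DecidableEq ι] {F : ℕ} {N J : Finset ι} {ξ : ι → ℝ} {xi : ℝ}

theorem IsLFRetained.neg (h : IsLFRetained F N ξ xi J) :
    IsLFRetained F N (fun j => -ξ j) (-xi) J := by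
  obtain ⟨H, L, hJ, hHs, hHm, hHa, hHc, hLs, hLm, hLa, hLc⟩ := h
  have habove : (N.filter fun j => -xi < -ξ j) = N.filter fun j => ξ j < xi :=
    filter_congr fun _ _ => neg_lt_neg_iff
  have hbelow : (N.filter fun j => -ξ j < -xi) = N.filter fun j => xi < ξ j :=
    filter_congr fun _ _ => neg_lt_neg_iff
  refine ⟨L, H, by rw [hJ, union_comm], ?_, ?_, ?_, ?_, ?_, ?_, ?_, ?_⟩ <;>
    simp only [habove, hbelow, neg_le_neg_iff]
  exacts [hLs, hLm, hLa, hLc, hHs, hHm, hHa, hHc]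

theorem IsLFRetained.le_of_few_above (h : IsLFRetained F N ξ xi J) {A : Finset ι} {W : ℝ}
    (hA : A.card ≤ F) (hxi : xi ≤ W) (hbig : ∀ u, W < ξ u → u ∈ A) : ∀ j ∈ J, ξ j ≤ W := by
  obtain ⟨H, -, rfl, -, hHm, hHa, hHc, -⟩ := h
  intro j hj
  by_contra! hjW
  rw [Finset.mem_sdiff, mem_union, not_or] at hj
  obtain ⟨hjN, hjH, -⟩ := hj
  have hj_above : j ∈ N.filter fun k => xi < ξ k := mem_filter.2 ⟨hjN, hxi.trans_lt hjW⟩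
  rcases le_or_gt (N.filter fun k => xi < ξ k).card F with hle | hgt
  · exact hjH (hHa hle ▸ hj_above)
  · have hsub : insert j H ⊆ A := insert_subset (hbig j hjW) fun u hu =>
      hbig u (hjW.trans_le (hHm u hu j (Finset.mem_sdiff.2 ⟨hj_above, hjH⟩)))
    have := card_le_card hsub
    rw [card_insert_of_notMem hjH, hHc hgt] at this
    omega

theorem IsLFRetained.exists_mem_of_forall_lt (h : IsLFRetained F N ξ xi J) {T : Finset ι}
    (hTN : T ⊆ N) (hT : F + 1 ≤ T.card) (hTlt : ∀ u ∈ T, ξ u < xi) : ∃ j ∈ T, j ∈ J := by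
  obtain ⟨H, L, rfl, hHs, -, -, -, -, -, hLa, hLc⟩ := h
  have hL : L.card ≤ F := by
    rcases le_or_gt (N.filter fun k => ξ k < xi).card F with hle | hgt
    · exact hLa hle ▸ hle
    · exact (hLc hgt).le
  obtain ⟨j, hjT, hjL⟩ := exists_mem_notMem_of_card_lt_card (hL.trans_lt hT)
  refine ⟨j, hjT, Finset.mem_sdiff.2 ⟨hTN hjT, fun hjHL => ?_⟩⟩
  rcases mem_union.1 hjHL with hjH | hjL'
  · exact (hTlt j hjT).not_gt (mem_filter.1 (hHs hjH)).2
  · exact hjL hjL'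

end Filtering

theorem sum_mul_le_of_mem {ι : Type*} [DecidableEq ι] {s : Finset ι} {w v : ι → ℝ} {k : ι}
    {U W : ℝ} (hw : ∀ j ∈ s, 0 ≤ w j) (hv : ∀ j ∈ s, v j ≤ W) (hk : k ∈ s) (hU : v k ≤ U) :
    ∑ j ∈ s, w j * v j ≤ w k * U + (∑ j ∈ s, w j - w k) * W := by
  rw [← add_sum_erase s _ hk, ← add_sum_erase s w hk, add_sub_cancel_left, sum_mul]
  gcongr with j hj
  · exact hw k hk
  · exact hw j (mem_of_mem_erase hj)
  · exact hv j (mem_of_mem_erase hj)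

theorem mul_add_one_sub_mul_le {a η U W : ℝ} (ha : η ≤ a) (hUW : U ≤ W) :
    a * U + (1 - a) * W ≤ η * U + (1 - η) * W := by
  nlinarith

theorem add_sum_mul_le_of_exists_le {ι : Type*} [DecidableEq ι] {i : ι} {J : Finset ι}
    {a v : ι → ℝ} {η U W : ℝ} (hη : 0 ≤ η) (ha : ∀ j ∈ insert i J, η ≤ a j)
    (hsum : a i + ∑ j ∈ J, a j = 1)
    (hiW : v i ≤ W) (hJW : ∀ j ∈ J, v j ≤ W) (hUW : U ≤ W)
    (hlow : v i ≤ U ∨ ∃ j ∈ J, v j ≤ U) :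
    a i * v i + ∑ j ∈ J, a j * v j ≤ η * U + (1 - η) * W := by
  have hai : η ≤ a i := ha i (mem_insert_self i J)
  have haJ : ∀ j ∈ J, 0 ≤ a j := fun j hj => hη.trans (ha j (mem_insert_of_mem hj))
  have hsumJ : ∑ j ∈ J, a j = 1 - a i := by linarith
  rcases hlow with hiU | ⟨k, hk, hkU⟩
  · have hJ : ∑ j ∈ J, a j * v j ≤ (∑ j ∈ J, a j) * W := by
      rw [sum_mul]; exact sum_le_sum fun j hj => mul_le_mul_of_nonneg_left (hJW j hj) (haJ j hj)
    rw [hsumJ] at hJ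
    have hi : a i * v i ≤ a i * U := mul_le_mul_of_nonneg_left hiU (hη.trans hai)
    linarith [mul_add_one_sub_mul_le hai hUW]
  · have hJ := sum_mul_le_of_mem haJ hJW hk hkU
    rw [hsumJ] at hJ
    have hi : a i * v i ≤ a i * W := mul_le_mul_of_nonneg_left hiW (hη.trans hai)
    have := mul_add_one_sub_mul_le (ha k (mem_insert_of_mem hk)) hUW
    linarith

theorem IsSubgradient.comp_neg {g : ℝ → ℝ} {z d : ℝ} (h : IsSubgradient g z d) :
    IsSubgradient (fun y => g (-y)) (-z) (-d) := fun y => by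
  have := h (-y)
  simp only [neg_neg]
  linarith

theorem HasBoundedSubgradients.comp_neg {g : ℝ → ℝ} {L : ℝ} (h : HasBoundedSubgradients g L) :
    HasBoundedSubgradients (fun y => g (-y)) L := fun z d hd => by
  simpa using h (-z) (-d) (by simpa using hd.comp_neg)

section Robust

variable {V : Type*} [Fintype V] [DecidableEq V] {E : V → V → Prop} {F : ℕ} {A : Finset V}

theorem RSRobust.exists_notMem_reachable (hrob : RSRobust E (F + 1) (F + 1))
    (hA : A.card ≤ F) {S T : Finset V} (hST : Disjoint S T) {u w : V} (hu : u ∈ S)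
    (huA : u ∉ A) (hw : w ∈ T) (hwA : w ∉ A) :
    ∃ v ∉ A, (v ∈ S ∧ F + 1 ≤ (NIn E v \ S).card) ∨ (v ∈ T ∧ F + 1 ≤ (NIn E v \ T).card) := by
  -- `RSRobust` is elaborated with classical decidable equality; `convert` bridges the instances.
  rcases hrob S T ⟨u, hu⟩ ⟨w, hw⟩ hST with hS | hT | hcard
  · exact ⟨u, huA, .inl ⟨hu, by convert hS u hu⟩⟩
  · exact ⟨w, hwA, .inr ⟨hw, by convert hT w hw⟩⟩
  · obtain ⟨v, hv, hvA⟩ := exists_mem_notMem_of_card_lt_card (hA.trans_lt hcard)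
    simp only [mem_union, mem_filter] at hv
    rcases hv with hv | hv
    · exact ⟨v, hvA, .inl ⟨hv.1, by convert hv.2⟩⟩
    · exact ⟨v, hvA, .inr ⟨hv.1, by convert hv.2⟩⟩

theorem sdiff_succ_subset_sdiff {X : ℕ → Finset V}
    (hX : ∀ s, ∀ v ∉ A, v ∉ X s ∨ F + 1 ≤ (NIn E v \ X s).card → v ∉ X (s + 1)) (s : ℕ) :
    X (s + 1) \ A ⊆ X s \ A := fun v hv => by
  rw [Finset.mem_sdiff] at hv ⊢
  exact ⟨by_contra fun h => hX s v hv.2 (.inl h) hv.1, hv.2⟩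

theorem card_sdiff_succ_lt_card_sdiff {X : ℕ → Finset V}
    (hX : ∀ s, ∀ v ∉ A, v ∉ X s ∨ F + 1 ≤ (NIn E v \ X s).card → v ∉ X (s + 1))
    {s : ℕ} {v : V} (hv : v ∈ X s) (hvA : v ∉ A)
    (hreach : F + 1 ≤ (NIn E v \ X s).card) : (X (s + 1) \ A).card < (X s \ A).card :=
  card_lt_card <| (ssubset_iff_of_subset (sdiff_succ_subset_sdiff hX s)).2
    ⟨v, Finset.mem_sdiff.2 ⟨hv, hvA⟩, fun h => hX s v hvA (.inr hreach) (Finset.mem_sdiff.1 h).1⟩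

theorem RSRobust.exists_le_forall_notMem (hrob : RSRobust E (F + 1) (F + 1))
    (hA : A.card ≤ F) {S T : ℕ → Finset V} (hST : ∀ s, Disjoint (S s) (T s))
    (hS : ∀ s, ∀ v ∉ A, v ∉ S s ∨ F + 1 ≤ (NIn E v \ S s).card → v ∉ S (s + 1))
    (hT : ∀ s, ∀ v ∉ A, v ∉ T s ∨ F + 1 ≤ (NIn E v \ T s).card → v ∉ T (s + 1)) :
    ∃ s ≤ Aᶜ.card, (∀ v ∉ A, v ∉ S s) ∨ (∀ v ∉ A, v ∉ T s) := by
  have hdecr : ∀ s, (∃ v, v ∉ A ∧ v ∈ S s) → (∃ w, w ∉ A ∧ w ∈ T s) →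
      (S (s + 1) \ A).card + (T (s + 1) \ A).card < (S s \ A).card + (T s \ A).card := by
    rintro s ⟨u, huA, hu⟩ ⟨w, hwA, hw⟩
    have hSle := card_le_card (sdiff_succ_subset_sdiff hS s)
    have hTle := card_le_card (sdiff_succ_subset_sdiff hT s)
    obtain ⟨v, hvA, ⟨hv, hreach⟩ | ⟨hv, hreach⟩⟩ :=
      hrob.exists_notMem_reachable hA (hST s) hu huA hw hwA
    · have := card_sdiff_succ_lt_card_sdiff hS hv hvA hreach
      omega
    · have := card_sdiff_succ_lt_card_sdiff hT hv hvA hreach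
      omega
  by_contra! hne
  have h0 : (S 0 \ A).card + (T 0 \ A).card ≤ Aᶜ.card := by
    rw [← card_union_of_disjoint ((hST 0).mono sdiff_subset sdiff_subset)]
    refine card_le_card (union_subset ?_ ?_) <;>
      exact fun v hv => mem_compl.2 (Finset.mem_sdiff.1 hv).2
  have hcount : ∀ s ≤ Aᶜ.card, (S s \ A).card + (T s \ A).card + s ≤ Aᶜ.card := by
    intro s
    induction s with
    | zero => simpa using h0
    | succ s ih =>
      intro hs
      have := hdecr s (hne s (by omega)).1 (hne s (by omega)).2
      have := ih (by omega)
      omega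
  obtain ⟨v, hvA, hv⟩ := (hne _ le_rfl).1
  have := card_pos.2 ⟨v, Finset.mem_sdiff.2 ⟨hv, hvA⟩⟩
  have := hcount _ le_rfl
  omega

end Robust

noncomputable def exceedSet {V : Type*} [Fintype V] (x : ℕ → V → ℝ) (t : ℕ) (M c η δ : ℝ)
    (s : ℕ) : Finset V :=
  univ.filter fun j => M - η ^ s * c + s * δ < x (t + s) j

namespace LFMalicious

variable {V : Type*} [Fintype V] [DecidableEq V] {E : V → V → Prop} {F : ℕ} {η L : ℝ}
  {R A : Finset V} {f : V → ℝ → ℝ} {α : ℕ → ℝ} {x : ℕ → V → ℝ}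

theorem neg (h : LFMalicious E F η R f α x) :
    LFMalicious E F η R (fun i y => f i (-y)) α (fun τ j => -x τ j) := by
  intro t i hi
  obtain ⟨J, a, d, hJ, ha, hsum, hd, hx⟩ := h t i hi
  have hz : a i * -x t i + ∑ j ∈ J, a j * -x t j =
      -(a i * x t i + ∑ j ∈ J, a j * x t j) := by
    simp only [mul_neg, sum_neg_distrib, neg_add]
  refine ⟨J, a, -d, hJ.neg, ha, hsum, hz ▸ hd.comp_neg, ?_⟩
  show -x (t + 1) i = _
  rw [hz, hx]
  ring

theorem le_one (h : LFMalicious E F η R f α x) (hη : 0 ≤ η) (hR : R.Nonempty) : η ≤ 1 := by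
  obtain ⟨i, hi⟩ := hR
  obtain ⟨J, a, -, -, ha, hsum, -⟩ := h 0 i hi
  have hJ : 0 ≤ ∑ j ∈ J, a j := sum_nonneg fun j hj => hη.trans (ha j (mem_insert_of_mem hj))
  linarith [ha i (mem_insert_self i J)]

theorem le_of_step (hdyn : LFMalicious E F η Aᶜ f α x) (hA : A.card ≤ F)
    (hη : 0 ≤ η) (hbdd : ∀ i ∈ Aᶜ, HasBoundedSubgradients (f i) L) {τ : ℕ} (hα : 0 ≤ α τ)
    {δ U W : ℝ} (hδ : L * α τ ≤ δ) (hUW : U ≤ W)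
    (hW : ∀ j ∈ Aᶜ, x τ j ≤ W) {i : V} (hi : i ∈ Aᶜ)
    (hlow : x τ i ≤ U ∨ F + 1 ≤ (NIn E i \ univ.filter fun j => U < x τ j).card) :
    x (τ + 1) i ≤ η * U + (1 - η) * W + δ := by
  obtain ⟨J, a, d, hJ, ha, hsum, hd, hx⟩ := hdyn τ i hi
  have hJW : ∀ j ∈ J, x τ j ≤ W := hJ.le_of_few_above hA (hW i hi) fun u hu => by
    by_contra huA
    exact (hW u (mem_compl.2 huA)).not_gt hu
  have hlow' : x τ i ≤ U ∨ ∃ j ∈ J, x τ j ≤ U := by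
    refine hlow.elim .inl fun hcard => (le_or_gt (x τ i) U).imp id fun hiU => ?_
    obtain ⟨j, hjT, hjJ⟩ := hJ.exists_mem_of_forall_lt sdiff_subset hcard fun u hu => by
      simp only [Finset.mem_sdiff, mem_filter, mem_univ, true_and, not_lt] at hu
      exact hu.2.trans_lt hiU
    simp only [Finset.mem_sdiff, mem_filter, mem_univ, true_and, not_lt] at hjT
    exact ⟨j, hjJ, hjT.2⟩
  have hz := add_sum_mul_le_of_exists_le hη ha hsum (hW i hi) hJW hUW hlow'
  have hstep : -(α τ * d) ≤ δ :=
    calc -(α τ * d) ≤ α τ * |d| := by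
          rw [← mul_neg]; exact mul_le_mul_of_nonneg_left (neg_le_abs d) hα
      _ ≤ α τ * L := mul_le_mul_of_nonneg_left (hbdd i hi _ _ hd) hα
      _ ≤ δ := by linarith
  rw [hx]
  linarith

theorem forall_le_add_mul (hdyn : LFMalicious E F η Aᶜ f α x) (hA : A.card ≤ F)
    (hη : 0 ≤ η) (hbdd : ∀ i ∈ Aᶜ, HasBoundedSubgradients (f i) L)
    (hα : ∀ τ, 0 ≤ α τ) {t : ℕ} {δ M : ℝ} (hδ : ∀ s, L * α (t + s) ≤ δ)
    (hM : ∀ j ∈ Aᶜ, x t j ≤ M) :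
    ∀ s : ℕ, ∀ j ∈ Aᶜ, x (t + s) j ≤ M + s * δ := by
  intro s
  induction s with
  | zero => simpa using hM
  | succ s ih =>
    intro j hj
    have := hdyn.le_of_step hA hη hbdd (hα _) (hδ s) le_rfl ih hj (.inl (ih j hj))
    rw [← add_assoc]
    push_cast
    linarith

theorem notMem_exceedSet_succ (hdyn : LFMalicious E F η Aᶜ f α x) (hA : A.card ≤ F)
    (hη : 0 ≤ η) (hbdd : ∀ i ∈ Aᶜ, HasBoundedSubgradients (f i) L)
    (hα : ∀ τ, 0 ≤ α τ) {t : ℕ} {δ M c : ℝ} (hδ : ∀ s, L * α (t + s) ≤ δ) (hc : 0 ≤ c)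
    (hM : ∀ j ∈ Aᶜ, x t j ≤ M) (s : ℕ) {v : V} (hv : v ∉ A)
    (hlow : v ∉ exceedSet x t M c η δ s ∨ F + 1 ≤ (NIn E v \ exceedSet x t M c η δ s).card) :
    v ∉ exceedSet x t M c η δ (s + 1) := by
  simp only [exceedSet, mem_filter, mem_univ, true_and, not_lt] at hlow ⊢
  have hUW : M - η ^ s * c + s * δ ≤ M + s * δ := by
    have := mul_nonneg (pow_nonneg hη s) hc
    linarith
  have := hdyn.le_of_step hA hη hbdd (hα _) (hδ s) hUW
    (hdyn.forall_le_add_mul hA hη hbdd hα hδ hM s) (mem_compl.2 hv) hlow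
  rw [← add_assoc, pow_succ]
  push_cast
  linarith

theorem le_of_forall_notMem_exceedSet (hdyn : LFMalicious E F η Aᶜ f α x) (hA : A.card ≤ F)
    (hη : 0 ≤ η) (hbdd : ∀ i ∈ Aᶜ, HasBoundedSubgradients (f i) L)
    (hα : ∀ τ, 0 ≤ α τ) {t s k : ℕ} {δ M c : ℝ} (hδ : ∀ s, L * α (t + s) ≤ δ)
    (hη1 : η ≤ 1) (hc : 0 ≤ c) (hsk : s ≤ k) (hs : ∀ v ∉ A, v ∉ exceedSet x t M c η δ s) :
    ∀ j ∈ Aᶜ, x (t + k) j ≤ M - η ^ k * c + k * δ := by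
  have hM : ∀ j ∈ Aᶜ, x (t + s) j ≤ M - η ^ s * c + s * δ := fun j hj => by
    simpa [exceedSet] using hs j (mem_compl.1 hj)
  intro j hj
  have := hdyn.forall_le_add_mul hA hη hbdd hα (fun r => by rw [add_assoc]; exact hδ (s + r)) hM
    (k - s) j hj
  rw [add_assoc, Nat.add_sub_cancel' hsk, Nat.cast_sub hsk] at this
  have := mul_le_mul_of_nonneg_right (pow_le_pow_of_le_one hη hη1 hsk) hc
  linarith

end LFMalicious

theorem disjoint_exceedSet_neg {V : Type*} [Fintype V] {x : ℕ → V → ℝ} {t : ℕ} {M m η δ : ℝ}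
    (hη0 : 0 ≤ η) (hη1 : η ≤ 1) (hmM : m ≤ M) (hδ : 0 ≤ δ) (s : ℕ) :
    Disjoint (exceedSet x t M ((M - m) / 2) η δ s)
      (exceedSet (fun τ j => -x τ j) t (-m) ((M - m) / 2) η δ s) := by
  refine disjoint_left.2 fun j hM hm => ?_
  simp only [exceedSet, mem_filter, mem_univ, true_and] at hM hm
  have := mul_le_mul_of_nonneg_right (pow_le_one₀ hη0 hη1 (n := s)) (sub_nonneg.2 hmM)
  have := mul_nonneg (Nat.cast_nonneg s : (0 : ℝ) ≤ s) hδ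
  linarith

theorem stmt13_general {V : Type*} [Fintype V] [DecidableEq V] (F : ℕ) (η L : ℝ)
    (hη : 0 < η) (hL : 0 < L) (E : V → V → Prop)
    (hrobust : RSRobust E (F + 1) (F + 1))
    (A : Finset V) (hA : A.card ≤ F)
    (hR : (Aᶜ : Finset V).Nonempty)
    (f : V → ℝ → ℝ)
    (hbdd : ∀ i ∈ (Aᶜ : Finset V), HasBoundedSubgradients (f i) L)
    (α : ℕ → ℝ) (hα0 : ∀ t, 0 ≤ α t) (hαbdd : ∃ C, ∀ t, α t ≤ C)
    (x : ℕ → V → ℝ)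
    (hdyn : LFMalicious E F η Aᶜ f α x) :
    ∀ t : ℕ,
      (Aᶜ : Finset V).sup' hR (x (t + (Aᶜ : Finset V).card)) -
          (Aᶜ : Finset V).inf' hR (x (t + (Aᶜ : Finset V).card)) ≤
        (1 - η ^ (Aᶜ : Finset V).card / 2) *
            ((Aᶜ : Finset V).sup' hR (x t) - (Aᶜ : Finset V).inf' hR (x t)) +
          2 * ((Aᶜ : Finset V).card : ℝ) * (L * ⨆ τ : ℕ, α (t + τ)) := by
  intro t
  obtain ⟨C, hC⟩ := hαbdd
  have hα_bdd : BddAbove (Set.range fun τ => α (t + τ)) := ⟨C, by rintro _ ⟨τ, rfl⟩; exact hC _⟩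
  set δ := L * ⨆ τ : ℕ, α (t + τ)
  have hδ : ∀ s, L * α (t + s) ≤ δ := fun s =>
    mul_le_mul_of_nonneg_left (le_ciSup hα_bdd s) hL.le
  have hδ0 : 0 ≤ δ := (mul_nonneg hL.le (hα0 _)).trans (hδ 0)
  have hη1 := hdyn.le_one hη.le hR
  set M := Aᶜ.sup' hR (x t)
  set m := Aᶜ.inf' hR (x t)
  have hM : ∀ j ∈ Aᶜ, x t j ≤ M := fun j hj => le_sup' _ hj
  have hm : ∀ j ∈ Aᶜ, -x t j ≤ -m := fun j hj => neg_le_neg (inf'_le _ hj)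
  have hmM : m ≤ M := (inf'_le _ hR.choose_spec).trans (le_sup' _ hR.choose_spec)
  have hc : 0 ≤ (M - m) / 2 := by linarith
  have hbdd' := fun i hi => (hbdd i hi).comp_neg
  obtain ⟨s, hs, hupper | hlower⟩ := hrobust.exists_le_forall_notMem hA
    (disjoint_exceedSet_neg hη.le hη1 hmM hδ0)
    (fun s _ => hdyn.notMem_exceedSet_succ hA hη.le hbdd hα0 hδ hc hM s)
    (fun s _ => hdyn.neg.notMem_exceedSet_succ hA hη.le hbdd' hα0 hδ hc hm s)
  · have hhi := hdyn.le_of_forall_notMem_exceedSet hA hη.le hbdd hα0 hδ hη1 hc hs hupper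
    have hlo := hdyn.neg.forall_le_add_mul hA hη.le hbdd' hα0 hδ hm Aᶜ.card
    have hlo' : ∀ j ∈ Aᶜ, m - Aᶜ.card * δ ≤ x (t + Aᶜ.card) j := fun j hj => by
      linarith [hlo j hj]
    have := sub_le_sub (sup'_le hR _ hhi) (le_inf' hR _ hlo')
    linarith
  · have hhi := hdyn.forall_le_add_mul hA hη.le hbdd hα0 hδ hM Aᶜ.card
    have hlo := hdyn.neg.le_of_forall_notMem_exceedSet hA hη.le hbdd' hα0 hδ hη1 hc hs hlower
    have hlo' : ∀ j ∈ Aᶜ, m + η ^ Aᶜ.card * ((M - m) / 2) - Aᶜ.card * δ ≤ x (t + Aᶜ.card) j :=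
      fun j hj => by linarith [hlo j hj]
    have := sub_le_sub (sup'_le hR _ hhi) (le_inf' hR _ hlo')
    linarith

/-- The contraction estimate for LF dynamics under `F`-total malicious adversaries in
`(F+1,F+1)`-robust networks: with `M(t), m(t)` the max/min regular value, `D = M − m`,
and `δ_t = L · sup_{τ≥t} α_τ`, one has
`D(t + |R|) ≤ (1 − η^{|R|}/2) D(t) + 2|R| δ_t` for every `t`. -/
theorem stmt13 {V : Type*} [Fintype V] [DecidableEq V] (F : ℕ) (η L : ℝ)
    (hη : 0 < η) (hL : 0 < L) (E : V → V → Prop)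
    (hrobust : RSRobust E (F + 1) (F + 1))
    (A : Finset V) (hA : A.card ≤ F)
    (hR : (Aᶜ : Finset V).Nonempty)
    (f : V → ℝ → ℝ)
    (hconv : ∀ i ∈ (Aᶜ : Finset V), ConvexOn ℝ Set.univ (f i))
    (hbdd : ∀ i ∈ (Aᶜ : Finset V), HasBoundedSubgradients (f i) L)
    (α : ℕ → ℝ) (hα0 : ∀ t, 0 ≤ α t) (hαbdd : ∃ C, ∀ t, α t ≤ C)
    (x : ℕ → V → ℝ)
    (hdyn : LFMalicious E F η Aᶜ f α x) :
    ∀ t : ℕ,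
      (Aᶜ : Finset V).sup' hR (x (t + (Aᶜ : Finset V).card)) -
          (Aᶜ : Finset V).inf' hR (x (t + (Aᶜ : Finset V).card)) ≤
        (1 - η ^ (Aᶜ : Finset V).card / 2) *
            ((Aᶜ : Finset V).sup' hR (x t) - (Aᶜ : Finset V).inf' hR (x t)) +
          2 * ((Aᶜ : Finset V).card : ℝ) * (L * ⨆ τ : ℕ, α (t + τ)) :=
  stmt13_general F η L hη hL E hrobust A hA hR f hbdd α hα0 hαbdd x hdyn
end
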